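/- arXiv:1602.08151 — 3 statements merged into one kernel-verified Lean document; each statement's English description precedes it below -/
import Mathlib

section
/- For any vector a ∈ ℝⁿ, matrix F ∈ ℝ^{p×n}, and vector b ∈ ℝᵖ, the maximum of (1/n)·zᵀa over z ∈ [-1,1]ⁿ satisfying (1/n)Fz ≥ b equals the minimum over σ ≥ 0 in ℝᵖ of (−bᵀσ + (1/n)‖Fᵀσ + a‖₁), provided the constraint set {z ∈ [-1,1]ⁿ : (1/n)Fz ≥ b} is nonempty. -/
/-!
Weak duality: for feasible `z` and `σ ≥ 0` the Lagrangian `zᵀa + σᵀ(Gz - b)` lies between the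
primal and the dual objective, because the maximum of `zᵀw` over the box `‖z‖_∞ ≤ 1` is `‖w‖₁`,
attained at the sign vector of `w`.

Strong duality: if every feasible `z` has `zᵀa < t`, the compact convex image of the box under
`z ↦ (Gz, zᵀa)` misses the closed orthant `{(y, s) | y ≥ b, s ≥ t}`, so Hahn–Banach separates
them by a functional `(y, s) ↦ σ'ᵀy + τ s`. Boundedness below on the orthant forces `σ', τ ≥ 0`,
and feasibility forces `τ > 0`; then `σ = σ' / τ` keeps the Lagrangian below `t` on the whole box,
so the dual objective at `σ` is below `t`.
-/

open Matrix

section SignVector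

variable {κ : Type*} [Fintype κ]

lemma abs_sign_le_one (x : ℝ) : |(SignType.sign x : ℝ)| ≤ 1 := by
  rcases SignType.sign x with _ | _ | _ <;> simp

lemma dotProduct_le_sum_abs {z : κ → ℝ} (hz : ∀ j, |z j| ≤ 1) (w : κ → ℝ) :
    z ⬝ᵥ w ≤ ∑ j, |w j| :=
  Finset.sum_le_sum fun j _ => calc
    z j * w j ≤ |z j| * |w j| := by rw [← abs_mul]; exact le_abs_self _
    _ ≤ |w j| := mul_le_of_le_one_left (abs_nonneg _) (hz j)

lemma sign_dotProduct_self (w : κ → ℝ) :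
    (fun j => (SignType.sign (w j) : ℝ)) ⬝ᵥ w = ∑ j, |w j| :=
  Finset.sum_congr rfl fun j _ => sign_mul_self (w j)

end SignVector

lemma LinearMap.apply_nonneg_of_bddBelow_image_Ici {E : Type*} [AddCommGroup E] [PartialOrder E]
    [IsOrderedAddMonoid E] [Module ℝ E] [PosSMulMono ℝ E] (f : E →ₗ[ℝ] ℝ) {q : E}
    (hf : BddBelow (f '' Set.Ici q)) {d : E} (hd : 0 ≤ d) : 0 ≤ f d := by
  obtain ⟨c, hc⟩ := hf
  by_contra! hneg
  set s := (f q - c + 1) / -f d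
  have hs : 0 ≤ s := div_nonneg (by linarith [hc ⟨q, le_rfl, rfl⟩]) (by linarith)
  have hfs : f (q + s • d) = c - 1 := by
    rw [map_add, map_smul, smul_eq_mul, div_mul_eq_mul_div, div_neg,
      mul_div_cancel_right₀ _ hneg.ne]
    ring
  linarith [hc ⟨q + s • d, le_add_of_nonneg_right (smul_nonneg hs hd), rfl⟩]

lemma LinearMap.apply_prod_eq_dotProduct_add {ι : Type*} [Fintype ι] [DecidableEq ι]
    (f : (ι → ℝ) × ℝ →ₗ[ℝ] ℝ) (y : ι → ℝ) (s : ℝ) :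
    f (y, s) = (fun i => f (Pi.single i 1, 0)) ⬝ᵥ y + s * f (0, 1) := by
  have hy : f (y, 0) = (fun i => f (Pi.single i 1, 0)) ⬝ᵥ y := by
    have := congr($((dotProductEquiv ℝ ι).apply_symm_apply (f ∘ₗ inl ℝ _ ℝ)) y)
    simp only [dotProductEquiv_apply_apply, comp_apply, inl_apply] at this
    rw [← this]
    rfl
  have hs : f (0, s) = s * f (0, 1) := by
    rw [← smul_eq_mul, ← map_smul, Prod.smul_mk, smul_zero, smul_eq_mul, mul_one]
  rw [← hy, ← hs, ← map_add, Prod.mk_add_mk, add_zero, zero_add]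

namespace BoxLP

variable {ι κ : Type*} [Fintype ι] [Fintype κ] (G : Matrix ι κ ℝ) (b : ι → ℝ) (a : κ → ℝ)

def lagrangian (z : κ → ℝ) (σ : ι → ℝ) : ℝ := z ⬝ᵥ a + σ ⬝ᵥ (G *ᵥ z - b)

def dualObjective (σ : ι → ℝ) : ℝ := -(b ⬝ᵥ σ) + ∑ j, |(Gᵀ *ᵥ σ + a) j|

lemma lagrangian_eq (z : κ → ℝ) (σ : ι → ℝ) :
    lagrangian G b a z σ = z ⬝ᵥ (Gᵀ *ᵥ σ + a) - b ⬝ᵥ σ := by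
  rw [lagrangian, dotProduct_add, dotProduct_mulVec, vecMul_transpose, dotProduct_sub,
    dotProduct_comm σ, dotProduct_comm σ]
  ring

lemma lagrangian_le_dualObjective {z : κ → ℝ} (hz : ∀ j, |z j| ≤ 1) (σ : ι → ℝ) :
    lagrangian G b a z σ ≤ dualObjective G b a σ := by
  rw [lagrangian_eq, dualObjective, neg_add_eq_sub]
  exact sub_le_sub_right (dotProduct_le_sum_abs hz _) _

lemma lagrangian_sign_eq_dualObjective (σ : ι → ℝ) :
    lagrangian G b a (fun j => (SignType.sign ((Gᵀ *ᵥ σ + a) j) : ℝ)) σ =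
      dualObjective G b a σ := by
  rw [lagrangian_eq, sign_dotProduct_self, dualObjective, neg_add_eq_sub]

lemma le_lagrangian {z : κ → ℝ} (hz : b ≤ G *ᵥ z) {σ : ι → ℝ} (hσ : 0 ≤ σ) :
    z ⬝ᵥ a ≤ lagrangian G b a z σ :=
  le_add_of_nonneg_right (dotProduct_nonneg_of_nonneg hσ (sub_nonneg.2 hz))

lemma exists_lagrangian_lt (hne : ∃ z, (∀ j, |z j| ≤ 1) ∧ b ≤ G *ᵥ z) {t : ℝ}
    (ht : ∀ z, (∀ j, |z j| ≤ 1) → b ≤ G *ᵥ z → z ⬝ᵥ a < t) :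
    ∃ σ, 0 ≤ σ ∧ ∀ z, (∀ j, |z j| ≤ 1) → lagrangian G b a z σ < t := by
  classical
  have hbox : {z : κ → ℝ | ∀ j, |z j| ≤ 1} = Metric.closedBall 0 1 := by
    ext z; simp [pi_norm_le_iff_of_nonneg]
  let φ : (κ → ℝ) →ₗ[ℝ] (ι → ℝ) × ℝ := (mulVecLin G).prod (dotProductBilin ℝ ℝ a)
  have hφ (z : κ → ℝ) : φ z = (G *ᵥ z, z ⬝ᵥ a) := by simp [φ, dotProduct_comm]
  have hdisj : Disjoint (φ '' {z | ∀ j, |z j| ≤ 1}) (Set.Ici (b, t)) := by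
    refine Set.disjoint_left.2 ?_
    rintro _ ⟨z, hz, rfl⟩ ⟨hGz, hza⟩
    rw [hφ] at hGz hza
    exact (ht z hz hGz).not_ge hza
  rw [hbox] at hdisj
  obtain ⟨f, u, v, hfK, huv, hfQ⟩ := geometric_hahn_banach_compact_closed
    ((convex_closedBall 0 1).linear_image φ)
    ((isCompact_closedBall 0 1).image φ.continuous_of_finiteDimensional)
    (convex_Ici (b, t)) isClosed_Ici hdisj
  have hK (z : κ → ℝ) (hz : ∀ j, |z j| ≤ 1) : f (G *ᵥ z, z ⬝ᵥ a) < u :=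
    hφ z ▸ hfK _ ⟨z, hbox ▸ hz, rfl⟩
  have hQ : BddBelow (f.toLinearMap '' Set.Ici (b, t)) :=
    ⟨v, Set.forall_mem_image.2 fun x hx => (hfQ x hx).le⟩
  set σ' : ι → ℝ := fun i => f (Pi.single i 1, 0)
  set τ := f (0, 1)
  have hf (y : ι → ℝ) (s : ℝ) : f (y, s) = σ' ⬝ᵥ y + s * τ :=
    f.toLinearMap.apply_prod_eq_dotProduct_add y s
  have hσ' : 0 ≤ σ' := fun i =>
    f.toLinearMap.apply_nonneg_of_bddBelow_image_Ici hQ (d := (Pi.single i 1, 0)) ⟨by simp, le_rfl⟩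
  have hτ : 0 < τ := by
    refine lt_of_le_of_ne
      (f.toLinearMap.apply_nonneg_of_bddBelow_image_Ici hQ (d := (0, 1)) ⟨le_rfl, zero_le_one⟩)
      fun hτ0 => ?_
    -- a feasible point gives a point of each set, differing only in the last coordinate
    obtain ⟨z₀, hz₀, hGz₀⟩ := hne
    have h1 := hK z₀ hz₀
    have h2 := hfQ (G *ᵥ z₀, t) ⟨hGz₀, le_rfl⟩
    rw [hf, ← hτ0] at h2
    rw [hf, ← hτ0] at h1
    linarith
  refine ⟨τ⁻¹ • σ', smul_nonneg (inv_nonneg.2 hτ.le) hσ', fun z hz => ?_⟩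
  have h := (hK z hz).trans (huv.trans (hfQ (b, t) Set.self_mem_Ici))
  rw [hf, hf] at h
  rw [lagrangian, smul_dotProduct, smul_eq_mul, dotProduct_sub, ← mul_lt_mul_iff_right₀ hτ]
  field_simp
  linarith

theorem sSup_primal_eq_sInf_dualObjective (hne : ∃ z, (∀ j, |z j| ≤ 1) ∧ b ≤ G *ᵥ z) :
    sSup ((· ⬝ᵥ a) '' {z | (∀ j, |z j| ≤ 1) ∧ b ≤ G *ᵥ z}) =
      sInf (dualObjective G b a '' Set.Ici 0) := by
  set P := (· ⬝ᵥ a) '' {z | (∀ j, |z j| ≤ 1) ∧ b ≤ G *ᵥ z}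
  set D := dualObjective G b a '' Set.Ici 0
  have weak : ∀ x ∈ P, ∀ y ∈ D, x ≤ y := by
    rintro _ ⟨z, ⟨hz, hGz⟩, rfl⟩ _ ⟨σ, hσ, rfl⟩
    exact (le_lagrangian G b a hGz hσ).trans (lagrangian_le_dualObjective G b a hz σ)
  have hP : P.Nonempty := Set.Nonempty.image _ hne
  have hD : D.Nonempty := Set.nonempty_Ici.image _
  have hPbdd : BddAbove P := ⟨_, fun x hx => weak x hx _ hD.some_mem⟩
  have hDbdd : BddBelow D := ⟨_, fun y hy => weak _ hP.some_mem y hy⟩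
  refine le_antisymm (csSup_le hP fun x hx => le_csInf hD (weak x hx)) (le_of_forall_gt ?_)
  intro t ht
  have hPt (z : κ → ℝ) (hz : ∀ j, |z j| ≤ 1) (hGz : b ≤ G *ᵥ z) : z ⬝ᵥ a < t :=
    (le_csSup hPbdd ⟨z, ⟨hz, hGz⟩, rfl⟩).trans_lt ht
  obtain ⟨σ, hσ, hL⟩ := exists_lagrangian_lt G b a hne hPt
  calc sInf D ≤ dualObjective G b a σ := csInf_le hDbdd ⟨σ, hσ, rfl⟩
    _ = lagrangian G b a (fun j => (SignType.sign ((Gᵀ *ᵥ σ + a) j) : ℝ)) σ :=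
        (lagrangian_sign_eq_dualObjective G b a σ).symm
    _ < t := hL _ fun j => abs_sign_le_one _

end BoxLP

open BoxLP in
theorem stmt0_general (p n : ℕ) (F : Matrix (Fin p) (Fin n) ℝ)
    (b : Fin p → ℝ) (a : Fin n → ℝ)
    (hne : ∃ z : Fin n → ℝ, (∀ j, |z j| ≤ 1) ∧
      ∀ i, b i ≤ (1 / (n : ℝ)) * ∑ j, F i j * z j) :
    sSup {v : ℝ | ∃ z : Fin n → ℝ, (∀ j, |z j| ≤ 1) ∧
        (∀ i, b i ≤ (1 / (n : ℝ)) * ∑ j, F i j * z j) ∧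
        v = (1 / (n : ℝ)) * ∑ j, z j * a j} =
    sInf {v : ℝ | ∃ σ : Fin p → ℝ, (∀ i, 0 ≤ σ i) ∧
        v = -(∑ i, b i * σ i) + (1 / (n : ℝ)) * ∑ j, |(∑ i, F i j * σ i) + a j|} := by
  set c : ℝ := 1 / n
  have hc : 0 ≤ c := by positivity
  have hfeas (z : Fin n → ℝ) : b ≤ (c • F) *ᵥ z ↔ ∀ i, b i ≤ c * ∑ j, F i j * z j := by
    rw [smul_mulVec, Pi.le_def]; rfl
  have hdual (σ : Fin p → ℝ) : dualObjective (c • F) b (c • a) σ =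
      -(∑ i, b i * σ i) + c * ∑ j, |(∑ i, F i j * σ i) + a j| := by
    rw [dualObjective, transpose_smul, smul_mulVec, ← smul_add, Finset.mul_sum]
    simp only [Pi.smul_apply, smul_eq_mul, abs_mul, abs_of_nonneg hc]
    rfl
  convert sSup_primal_eq_sInf_dualObjective (c • F) b (c • a) (by simpa only [hfeas] using hne)
    using 2
  · ext v
    simp only [Set.mem_image, Set.mem_ofPred_eq, hfeas, dotProduct_smul, smul_eq_mul, eq_comm,
      and_assoc]
    rfl
  · ext v
    simp only [Set.mem_image, Set.mem_Ici, hdual, eq_comm, Pi.le_def]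
    rfl

/-- Lagrangian duality for a linear program over the box `[-1,1]^n`
intersected with the halfspaces `(1/n) F z ≥ b`. -/
theorem stmt0 (p n : ℕ) (hn : 0 < n) (F : Matrix (Fin p) (Fin n) ℝ)
    (b : Fin p → ℝ) (a : Fin n → ℝ)
    (hne : ∃ z : Fin n → ℝ, (∀ j, |z j| ≤ 1) ∧
      ∀ i, b i ≤ (1 / (n : ℝ)) * ∑ j, F i j * z j) :
    sSup {v : ℝ | ∃ z : Fin n → ℝ, (∀ j, |z j| ≤ 1) ∧
        (∀ i, b i ≤ (1 / (n : ℝ)) * ∑ j, F i j * z j) ∧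
        v = (1 / (n : ℝ)) * ∑ j, z j * a j} =
    sInf {v : ℝ | ∃ σ : Fin p → ℝ, (∀ i, 0 ≤ σ i) ∧
        v = -(∑ i, b i * σ i) + (1 / (n : ℝ)) * ∑ j, |(∑ i, F i j * σ i) + a j|} :=
  stmt0_general p n F b a hne
end

section
/- Let ℓ₊, ℓ₋: [-1,1] → ℝ be twice differentiable on (-1,1) with ℓ₊ decreasing and ℓ₋ increasing, and set Γ(g) := ℓ₋(g) − ℓ₊(g). Then Γ is increasing on (-1,1), and the potential well Ψ(m) defined as −m + 2ℓ₋(−1) for m ≤ Γ(−1), ℓ₊(Γ⁻¹(m)) + ℓ₋(Γ⁻¹(m)) for m ∈ (Γ(−1), Γ(1)), and m + 2ℓ₊(1) for m ≥ Γ(1), is continuous and 1-Lipschitz on ℝ. -/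
/-!
Writing `S g = ℓ₊ g + ℓ₋ g`, monotonicity of the partial losses gives
`|S g - S g'| ≤ |Γ g - Γ g'|`. Hence `Ψ` is the lower envelope
`Ψ m = min_{g ∈ [-1,1]} (S g + |m - Γ g|)`, the minimum being attained at `g = -1`, `Γ⁻¹ m`
or `1` according to the piece containing `m`; a pointwise attained infimum of 1-Lipschitz
functions is 1-Lipschitz.
-/

open Set

theorem LipschitzWith.of_forall_le_of_exists_eq {α ι : Type*} [PseudoMetricSpace α]
    {K : NNReal} {f : α → ℝ} {h : ι → α → ℝ} {s : Set ι} (hh : ∀ i, LipschitzWith K (h i))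
    (hle : ∀ i ∈ s, ∀ x, f x ≤ h i x) (hex : ∀ x, ∃ i ∈ s, f x = h i x) :
    LipschitzWith K f := by
  refine LipschitzWith.of_le_add_mul K fun x y => ?_
  obtain ⟨i, hi, hfy⟩ := hex y
  calc f x ≤ h i x := hle i hi x
    _ ≤ h i y + K * dist x y := (hh i).le_add_mul x y
    _ = f y + K * dist x y := by rw [hfy]

theorem AntitoneOn.abs_add_sub_add_le {α : Type*} [LinearOrder α] {f g : α → ℝ} {s : Set α}
    (hf : AntitoneOn f s) (hg : MonotoneOn g s) {x y : α} (hx : x ∈ s) (hy : y ∈ s) :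
    |(f y + g y) - (f x + g x)| ≤ |(g y - f y) - (g x - f x)| := by
  rcases le_total x y with hxy | hyx
  · have := hf hx hy hxy
    have := hg hx hy hxy
    rw [abs_le, abs_of_nonneg (by linarith)]
    constructor <;> linarith
  · have := hf hy hx hyx
    have := hg hy hx hyx
    rw [abs_le, abs_of_nonpos (by linarith)]
    constructor <;> linarith

section PotentialWell

variable (lp lm Γinv : ℝ → ℝ)

noncomputable def potentialWell (m : ℝ) : ℝ :=
  if m ≤ lm (-1) - lp (-1) then -m + 2 * lm (-1)
  else if m < lm 1 - lp 1 then lp (Γinv m) + lm (Γinv m)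
  else m + 2 * lp 1

variable {lp lm Γinv}

theorem potentialWell_le (hlp : AntitoneOn lp (Icc (-1) 1)) (hlm : MonotoneOn lm (Icc (-1) 1))
    (hinv : ∀ m ∈ Ioo (lm (-1) - lp (-1)) (lm 1 - lp 1),
      Γinv m ∈ Icc (-1 : ℝ) 1 ∧ lm (Γinv m) - lp (Γinv m) = m)
    {g : ℝ} (hg : g ∈ Icc (-1) 1) (m : ℝ) :
    potentialWell lp lm Γinv m ≤ lp g + lm g + |m - (lm g - lp g)| := by
  have hm1 : (-1 : ℝ) ∈ Icc (-1) 1 := by norm_num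
  have h1 : (1 : ℝ) ∈ Icc (-1) 1 := by norm_num
  unfold potentialWell
  split_ifs with hlow hmid
  · linarith [hlm hm1 hg hg.1, neg_abs_le (m - (lm g - lp g))]
  · obtain ⟨hg₀, hΓ⟩ := hinv m ⟨not_le.mp hlow, hmid⟩
    have key := hlp.abs_add_sub_add_le hlm hg₀ hg
    rw [hΓ] at key
    linarith [neg_abs_le (lp g + lm g - (lp (Γinv m) + lm (Γinv m))),
      abs_sub_comm (lm g - lp g) m]
  · linarith [hlp hg h1 hg.2, le_abs_self (m - (lm g - lp g))]

theorem exists_potentialWell_eq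
    (hinv : ∀ m ∈ Ioo (lm (-1) - lp (-1)) (lm 1 - lp 1),
      Γinv m ∈ Icc (-1 : ℝ) 1 ∧ lm (Γinv m) - lp (Γinv m) = m) (m : ℝ) :
    ∃ g ∈ Icc (-1 : ℝ) 1, potentialWell lp lm Γinv m = lp g + lm g + |m - (lm g - lp g)| := by
  unfold potentialWell
  split_ifs with hlow hmid
  · refine ⟨-1, by norm_num, ?_⟩
    rw [abs_of_nonpos (by linarith)]
    ring
  · obtain ⟨hg₀, hΓ⟩ := hinv m ⟨not_le.mp hlow, hmid⟩
    exact ⟨Γinv m, hg₀, by rw [hΓ, sub_self, abs_zero, add_zero]⟩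
  · refine ⟨1, by norm_num, ?_⟩
    rw [abs_of_nonneg (by linarith)]
    ring

theorem lipschitzWith_one_potentialWell (hlp : AntitoneOn lp (Icc (-1) 1))
    (hlm : MonotoneOn lm (Icc (-1) 1))
    (hinv : ∀ m ∈ Ioo (lm (-1) - lp (-1)) (lm 1 - lp 1),
      Γinv m ∈ Icc (-1 : ℝ) 1 ∧ lm (Γinv m) - lp (Γinv m) = m) :
    LipschitzWith 1 (potentialWell lp lm Γinv) :=
  .of_forall_le_of_exists_eq
    (fun g => by
      simpa only [zero_add, ← Real.dist_eq] using (LipschitzWith.const _).add (.dist_left _))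
    (fun _ hg m => potentialWell_le hlp hlm hinv hg m) (exists_potentialWell_eq hinv)

end PotentialWell

theorem stmt13_general (lp lm : ℝ → ℝ) (Γinv : ℝ → ℝ)
    (hlp : StrictAntiOn lp (Set.Icc (-1 : ℝ) 1))
    (hlm : StrictMonoOn lm (Set.Icc (-1 : ℝ) 1))
    (hinv : ∀ m ∈ Set.Ioo (lm (-1) - lp (-1)) (lm 1 - lp 1),
      Γinv m ∈ Set.Icc (-1 : ℝ) 1 ∧ lm (Γinv m) - lp (Γinv m) = m) :
    StrictMonoOn (fun g => lm g - lp g) (Set.Icc (-1 : ℝ) 1) ∧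
    Continuous (fun m : ℝ =>
      if m ≤ lm (-1) - lp (-1) then -m + 2 * lm (-1)
      else if m < lm 1 - lp 1 then lp (Γinv m) + lm (Γinv m)
      else m + 2 * lp 1) ∧
    LipschitzWith 1 (fun m : ℝ =>
      if m ≤ lm (-1) - lp (-1) then -m + 2 * lm (-1)
      else if m < lm 1 - lp 1 then lp (Γinv m) + lm (Γinv m)
      else m + 2 * lp 1) := by
  have hΨ : LipschitzWith 1 (potentialWell lp lm Γinv) :=
    lipschitzWith_one_potentialWell hlp.antitoneOn hlm.monotoneOn hinv
  refine ⟨?_, hΨ.continuous, hΨ⟩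
  simpa only [sub_eq_add_neg] using hlm.add hlp.neg

/-- With partial losses `ℓ₊` decreasing and `ℓ₋` increasing (twice differentiable on
`(-1,1)`), the score function `Γ = ℓ₋ − ℓ₊` is increasing, and the general-loss
potential well `Ψ` is continuous and 1-Lipschitz on `ℝ`. -/
theorem stmt13 (lp lm : ℝ → ℝ) (Γinv : ℝ → ℝ)
    (hlp : StrictAntiOn lp (Set.Icc (-1 : ℝ) 1))
    (hlm : StrictMonoOn lm (Set.Icc (-1 : ℝ) 1))
    (hlpd : ∀ x ∈ Set.Ioo (-1 : ℝ) 1, DifferentiableAt ℝ lp x)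
    (hlmd : ∀ x ∈ Set.Ioo (-1 : ℝ) 1, DifferentiableAt ℝ lm x)
    (hlpd2 : ∀ x ∈ Set.Ioo (-1 : ℝ) 1, DifferentiableAt ℝ (deriv lp) x)
    (hlmd2 : ∀ x ∈ Set.Ioo (-1 : ℝ) 1, DifferentiableAt ℝ (deriv lm) x)
    (hlpc : ContinuousOn lp (Set.Icc (-1 : ℝ) 1))
    (hlmc : ContinuousOn lm (Set.Icc (-1 : ℝ) 1))
    (hinv : ∀ m ∈ Set.Ioo (lm (-1) - lp (-1)) (lm 1 - lp 1),
      Γinv m ∈ Set.Icc (-1 : ℝ) 1 ∧ lm (Γinv m) - lp (Γinv m) = m) :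
    StrictMonoOn (fun g => lm g - lp g) (Set.Icc (-1 : ℝ) 1) ∧
    Continuous (fun m : ℝ =>
      if m ≤ lm (-1) - lp (-1) then -m + 2 * lm (-1)
      else if m < lm 1 - lp 1 then lp (Γinv m) + lm (Γinv m)
      else m + 2 * lp 1) ∧
    LipschitzWith 1 (fun m : ℝ =>
      if m ≤ lm (-1) - lp (-1) then -m + 2 * lm (-1)
      else if m < lm 1 - lp 1 then lp (Γinv m) + lm (Γinv m)
      else m + 2 * lp 1) :=
  stmt13_general lp lm Γinv hlp hlm hinv
end

section
/- Under the assumptions that ℓ₊ is decreasing, ℓ₋ is increasing, both twice differentiable on (−1,1), and ℓ₋′(x)·ℓ₊″(x) ≥ ℓ₋″(x)·ℓ₊′(x) for all x ∈ (−1,1), the potential well Ψ(m) := ℓ₊(Γ⁻¹(m)) + ℓ₋(Γ⁻¹(m)) is convex on (Γ(−1), Γ(1)), where Γ(g) = ℓ₋(g) − ℓ₊(g). -/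
/-!
Write `F = ℓ₊ + ℓ₋`, so that `Ψ = F ∘ Γ⁻¹`. By Cauchy's mean value theorem the slope of `Ψ`
between `Γ a` and `Γ b` equals `F′ ξ / Γ′ ξ` for some `ξ ∈ (a, b)`, so `Ψ` is convex as soon as
`F′ / Γ′` is monotone; no differentiability of `Γ⁻¹` is needed. The derivative of `F′ / Γ′` has
the sign of `F″ Γ′ - F′ Γ″ = 2 (ℓ₊″ ℓ₋′ - ℓ₋″ ℓ₊′) ≥ 0`.
-/

open Set

section RatioOfDerivatives

variable {s : Set ℝ} {f g f' g' : ℝ → ℝ}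

lemma exists_mem_Ioo_div_sub_eq_div_deriv {a b : ℝ} (hab : a < b)
    (hf : ∀ x ∈ Icc a b, HasDerivAt f (f' x) x) (hg : ∀ x ∈ Icc a b, HasDerivAt g (g' x) x)
    (hg' : ∀ x ∈ Ioo a b, 0 < g' x) :
    ∃ c ∈ Ioo a b, (f b - f a) / (g b - g a) = f' c / g' c := by
  have hfc : ContinuousOn f (Icc a b) := fun x hx => (hf x hx).continuousAt.continuousWithinAt
  have hgc : ContinuousOn g (Icc a b) := fun x hx => (hg x hx).continuousAt.continuousWithinAt
  have hIoo : Ioo a b ⊆ Icc a b := Ioo_subset_Icc_self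
  obtain ⟨d, hd, hgd⟩ := exists_hasDerivAt_eq_slope g g' hab hgc fun x hx => hg x (hIoo hx)
  have hgab : 0 < g b - g a := by
    rw [eq_div_iff (sub_pos.2 hab).ne'] at hgd
    rw [← hgd]
    exact mul_pos (hg' d hd) (sub_pos.2 hab)
  obtain ⟨c, hc, hcauchy⟩ := exists_ratio_hasDerivAt_eq_ratio_slope f f' hab hfc
    (fun x hx => hf x (hIoo hx)) g g' hgc fun x hx => hg x (hIoo hx)
  refine ⟨c, hc, ?_⟩
  rw [div_eq_div_iff hgab.ne' (hg' c hc).ne']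
  linarith

lemma div_sub_le_div_sub_of_monotoneOn_div_deriv (hs : Convex ℝ s)
    (hf : ∀ x ∈ s, HasDerivAt f (f' x) x) (hg : ∀ x ∈ s, HasDerivAt g (g' x) x)
    (hg' : ∀ x ∈ s, 0 < g' x) (hmono : MonotoneOn (fun x => f' x / g' x) s)
    {a b c : ℝ} (ha : a ∈ s) (hc : c ∈ s) (hab : a < b) (hbc : b < c) :
    (f b - f a) / (g b - g a) ≤ (f c - f b) / (g c - g b) := by
  have hac : Icc a c ⊆ s := hs.ordConnected.out ha hc
  have hab_s : Icc a b ⊆ s := (Icc_subset_Icc_right hbc.le).trans hac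
  have hbc_s : Icc b c ⊆ s := (Icc_subset_Icc_left hab.le).trans hac
  obtain ⟨ξ, hξ, hslope₁⟩ := exists_mem_Ioo_div_sub_eq_div_deriv hab
    (fun x hx => hf x (hab_s hx)) (fun x hx => hg x (hab_s hx))
    fun x hx => hg' x (hab_s (Ioo_subset_Icc_self hx))
  obtain ⟨η, hη, hslope₂⟩ := exists_mem_Ioo_div_sub_eq_div_deriv hbc
    (fun x hx => hf x (hbc_s hx)) (fun x hx => hg x (hbc_s hx))
    fun x hx => hg' x (hbc_s (Ioo_subset_Icc_self hx))
  rw [hslope₁, hslope₂]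
  exact hmono (hab_s (Ioo_subset_Icc_self hξ)) (hbc_s (Ioo_subset_Icc_self hη))
    (hξ.2.trans hη.1).le

theorem convexOn_comp_of_monotoneOn_div_deriv (hs : Convex ℝ s)
    (hf : ∀ x ∈ s, HasDerivAt f (f' x) x) (hg : ∀ x ∈ s, HasDerivAt g (g' x) x)
    (hg' : ∀ x ∈ s, 0 < g' x) (hmono : MonotoneOn (fun x => f' x / g' x) s)
    {t : Set ℝ} (ht : Convex ℝ t) {φ : ℝ → ℝ} (hφ : ∀ m ∈ t, φ m ∈ s ∧ g (φ m) = m) :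
    ConvexOn ℝ t (fun m => f (φ m)) := by
  have hg_strictMono : StrictMonoOn g s :=
    strictMonoOn_of_hasDerivWithinAt_pos hs
      (fun x hx => (hg x hx).continuousAt.continuousWithinAt)
      (fun x hx => (hg x (interior_subset hx)).hasDerivWithinAt)
      fun x hx => hg' x (interior_subset hx)
  have hφ_lt : ∀ {x y}, x ∈ t → y ∈ t → x < y → φ x < φ y := fun hx hy hxy => by
    rwa [← hg_strictMono.lt_iff_lt (hφ _ hx).1 (hφ _ hy).1, (hφ _ hx).2, (hφ _ hy).2]
  refine convexOn_of_slope_mono_adjacent ht fun {x y z} hx hz hxy hyz => ?_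
  have hy : y ∈ t := ht.ordConnected.out hx hz ⟨hxy.le, hyz.le⟩
  have hslopes := div_sub_le_div_sub_of_monotoneOn_div_deriv hs hf hg hg' hmono
    (hφ x hx).1 (hφ z hz).1 (hφ_lt hx hy hxy) (hφ_lt hy hz hyz)
  rwa [(hφ x hx).2, (hφ y hy).2, (hφ z hz).2] at hslopes

end RatioOfDerivatives

lemma monotoneOn_div_of_hasDerivAt {s : Set ℝ} {u v u' v' : ℝ → ℝ} (hs : Convex ℝ s)
    (hu : ∀ x ∈ s, HasDerivAt u (u' x) x) (hv : ∀ x ∈ s, HasDerivAt v (v' x) x)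
    (hv₀ : ∀ x ∈ s, v x ≠ 0) (hderiv : ∀ x ∈ s, u x * v' x ≤ u' x * v x) :
    MonotoneOn (fun x => u x / v x) s := by
  have hquot : ∀ x ∈ s,
      HasDerivAt (fun x => u x / v x) ((u' x * v x - u x * v' x) / v x ^ 2) x :=
    fun x hx => (hu x hx).div (hv x hx) (hv₀ x hx)
  refine monotoneOn_of_hasDerivWithinAt_nonneg hs
    (fun x hx => (hquot x hx).continuousAt.continuousWithinAt)
    (fun x hx => (hquot x (interior_subset hx)).hasDerivWithinAt) fun x hx => ?_
  exact div_nonneg (sub_nonneg.2 (hderiv x (interior_subset hx))) (sq_nonneg _)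

theorem stmt14_general (lp lm : ℝ → ℝ) (Γinv : ℝ → ℝ)
    (hlpd2 : ∀ x ∈ Set.Ioo (-1 : ℝ) 1, DifferentiableAt ℝ (deriv lp) x)
    (hlmd2 : ∀ x ∈ Set.Ioo (-1 : ℝ) 1, DifferentiableAt ℝ (deriv lm) x)
    (hlp' : ∀ x ∈ Set.Ioo (-1 : ℝ) 1, deriv lp x < 0)
    (hlm' : ∀ x ∈ Set.Ioo (-1 : ℝ) 1, 0 < deriv lm x)
    (hineq : ∀ x ∈ Set.Ioo (-1 : ℝ) 1,
      deriv (deriv lp) x * deriv lm x ≥ deriv (deriv lm) x * deriv lp x)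
    (hinv : ∀ m ∈ Set.Ioo (lm (-1) - lp (-1)) (lm 1 - lp 1),
      Γinv m ∈ Set.Ioo (-1 : ℝ) 1 ∧ lm (Γinv m) - lp (Γinv m) = m) :
    ConvexOn ℝ (Set.Ioo (lm (-1) - lp (-1)) (lm 1 - lp 1))
      (fun m => lp (Γinv m) + lm (Γinv m)) := by
  have hlp : ∀ x ∈ Ioo (-1 : ℝ) 1, HasDerivAt lp (deriv lp x) x := fun x hx =>
    (differentiableAt_of_deriv_ne_zero (hlp' x hx).ne).hasDerivAt
  have hlm : ∀ x ∈ Ioo (-1 : ℝ) 1, HasDerivAt lm (deriv lm x) x := fun x hx =>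
    (differentiableAt_of_deriv_ne_zero (hlm' x hx).ne').hasDerivAt
  have hΓ' : ∀ x ∈ Ioo (-1 : ℝ) 1, 0 < deriv lm x - deriv lp x := fun x hx =>
    sub_pos.2 ((hlp' x hx).trans (hlm' x hx))
  have hmono : MonotoneOn (fun x => (deriv lp x + deriv lm x) / (deriv lm x - deriv lp x))
      (Ioo (-1) 1) :=
    monotoneOn_div_of_hasDerivAt (convex_Ioo _ _)
      (fun x hx => (hlpd2 x hx).hasDerivAt.add (hlmd2 x hx).hasDerivAt)
      (fun x hx => (hlmd2 x hx).hasDerivAt.sub (hlpd2 x hx).hasDerivAt)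
      (fun x hx => (hΓ' x hx).ne') fun x hx => by linarith [hineq x hx]
  exact convexOn_comp_of_monotoneOn_div_deriv (convex_Ioo _ _)
    (fun x hx => (hlp x hx).add (hlm x hx)) (fun x hx => (hlm x hx).sub (hlp x hx)) hΓ' hmono
    (convex_Ioo _ _) hinv

/-- Under `ℓ₊′ < 0`, `ℓ₋′ > 0`, and `ℓ₋′ ℓ₊″ ≥ ℓ₋″ ℓ₊′` on `(−1,1)`, the potential well
`Ψ(m) = ℓ₊(Γ⁻¹(m)) + ℓ₋(Γ⁻¹(m))` is convex on `(Γ(−1), Γ(1))`, where `Γ = ℓ₋ − ℓ₊`. -/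
theorem stmt14 (lp lm : ℝ → ℝ) (Γinv : ℝ → ℝ)
    (hlpd : ∀ x ∈ Set.Ioo (-1 : ℝ) 1, DifferentiableAt ℝ lp x)
    (hlmd : ∀ x ∈ Set.Ioo (-1 : ℝ) 1, DifferentiableAt ℝ lm x)
    (hlpd2 : ∀ x ∈ Set.Ioo (-1 : ℝ) 1, DifferentiableAt ℝ (deriv lp) x)
    (hlmd2 : ∀ x ∈ Set.Ioo (-1 : ℝ) 1, DifferentiableAt ℝ (deriv lm) x)
    (hlp' : ∀ x ∈ Set.Ioo (-1 : ℝ) 1, deriv lp x < 0)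
    (hlm' : ∀ x ∈ Set.Ioo (-1 : ℝ) 1, 0 < deriv lm x)
    (hineq : ∀ x ∈ Set.Ioo (-1 : ℝ) 1,
      deriv (deriv lp) x * deriv lm x ≥ deriv (deriv lm) x * deriv lp x)
    (hinv : ∀ m ∈ Set.Ioo (lm (-1) - lp (-1)) (lm 1 - lp 1),
      Γinv m ∈ Set.Ioo (-1 : ℝ) 1 ∧ lm (Γinv m) - lp (Γinv m) = m) :
    ConvexOn ℝ (Set.Ioo (lm (-1) - lp (-1)) (lm 1 - lp 1))
      (fun m => lp (Γinv m) + lm (Γinv m)) :=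
  stmt14_general lp lm Γinv hlpd2 hlmd2 hlp' hlm' hineq hinv
end
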